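/- Let 0 < d < 1, α > 0, and π_h = V_h ∏_{t=1}^{h-1}(1-V_t) with V_t ~ Beta(1-d, α+td) independent. Then Var(log π_h) = ψ₁(1-d) - ψ₁(α) + (1/d²)(ψ₁(α/d) - ψ₁(α/d + h)). -/

import Mathlib

open MeasureTheory ProbabilityTheory Real Filter Finset
open scoped ENNReal NNReal

noncomputable def betaPDF (a b x : ℝ) : ℝ≥0∞ :=
  ENNReal.ofReal (if 0 < x ∧ x < 1 then
    (Real.Gamma (a + b) / (Real.Gamma a * Real.Gamma b)) * x ^ (a - 1) * (1 - x) ^ (b - 1)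
    else 0)

/-- The Beta(a,b) distribution on ℝ. -/
noncomputable def betaMeasure (a b : ℝ) : Measure ℝ :=
  MeasureTheory.volume.withDensity (_root_.betaPDF a b)

/-- The digamma function ψ = (log Γ)'. -/
noncomputable def digamma (x : ℝ) : ℝ :=
  deriv (fun y => Real.log (Real.Gamma y)) x

/-- The trigamma function ψ₁ = (log Γ)''. -/
noncomputable def trigamma (x : ℝ) : ℝ :=
  deriv (deriv (fun y => Real.log (Real.Gamma y))) x

/-- Stick-breaking weight π_h = V_h ∏_{t=1}^{h-1} (1 - V_t), where `W t` plays the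
role of `V_{t+1}` (so `V_t = W (t-1)` for `t ≥ 1`). -/
noncomputable def stickWeight {Ω : Type*} (W : ℕ → Ω → ℝ) (h : ℕ) (ω : Ω) : ℝ :=
  W (h - 1) ω * ∏ t ∈ Finset.range (h - 1), (1 - W t ω)

/-! The log-weight `log π_h = log V_h + ∑_{t<h} log (1 - V_t)` is a sum of independent terms,
so its variance is the sum of their variances. For `X ~ Beta(a, b)` one has
`E[(log X)^k] = B(a, b)⁻¹ ∂ₐᵏ B(a, b)` (differentiate under the integral sign), hence
`Var(log X) = ∂ₐ² log B(a, b) = ψ₁(a) - ψ₁(a + b)`, and `1 - X ~ Beta(b, a)` gives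
`Var(log (1 - X)) = ψ₁(b) - ψ₁(a + b)`. With `a = 1 - d`, `b = α + t d`, the recurrence
`ψ₁(x + 1) = ψ₁(x) - x⁻²` telescopes the sum, and the leftover
`∑_{t ≤ h-1} (α + t d)⁻²` is `d⁻² (ψ₁(α/d) - ψ₁(α/d + h))`. -/
open scoped Topology

namespace Real

theorem analyticAt_Gamma {x : ℝ} (hx : 0 < x) : AnalyticAt ℝ Gamma x := by
  have hU : IsOpen {s : ℂ | 0 < s.re} := isOpen_lt continuous_const Complex.continuous_re
  have hdiff : DifferentiableOn ℂ Complex.Gamma {s : ℂ | 0 < s.re} := fun s hs =>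
    (Complex.differentiableAt_Gamma s fun m hsm => by
      simp only [hsm, Complex.neg_re, Complex.natCast_re, Set.mem_ofPred_eq, Left.neg_pos_iff] at hs
      exact (Nat.cast_nonneg m).not_gt hs).differentiableWithinAt
  have hC : AnalyticAt ℂ Complex.Gamma (x : ℂ) := hdiff.analyticOnNhd hU _ (by simpa using hx)
  have heq : Gamma = fun y : ℝ => (Complex.Gamma y).re := by
    funext y; rw [Complex.Gamma_ofReal, Complex.ofReal_re]
  rw [heq]
  exact (Complex.reCLM.analyticAt _).comp
    (hC.restrictScalars.comp (Complex.ofRealCLM.analyticAt x))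

theorem analyticAt_log_Gamma {x : ℝ} (hx : 0 < x) :
    AnalyticAt ℝ (fun y => log (Gamma y)) x :=
  (analyticAt_Gamma hx).log (Gamma_pos_of_pos hx)

theorem abs_log_pow_mul_rpow_le {a : ℝ} (ha : 0 < a) (k : ℕ) {x : ℝ} (hx0 : 0 < x)
    (hx1 : x ≤ 1) :
    |log x| ^ k * x ^ (a - 1) ≤ (2 * (k + 1) / a) ^ k * x ^ (a / 2 - 1) := by
  set t := a / (2 * (k + 1)) with ht_def
  have ht : 0 < t := by positivity
  have hlog : |log x| * x ^ t ≤ 2 * (k + 1) / a := by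
    have := (abs_log_mul_self_rpow_lt x t hx0 hx1 ht).le
    rwa [abs_mul, abs_of_nonneg (rpow_nonneg hx0.le t), ht_def, one_div_div] at this
  have hsplit : x ^ (a - 1) ≤ (x ^ t) ^ k * x ^ (a / 2 - 1) := by
    rw [← rpow_natCast, ← rpow_mul hx0.le, ← rpow_add hx0]
    refine rpow_le_rpow_of_exponent_ge hx0 hx1 ?_
    have : t * k ≤ a / 2 := by
      rw [ht_def, div_mul_eq_mul_div, div_le_div_iff₀ (by positivity) two_pos]
      nlinarith
    linarith
  calc |log x| ^ k * x ^ (a - 1) ≤ |log x| ^ k * ((x ^ t) ^ k * x ^ (a / 2 - 1)) := by gcongr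
    _ = (|log x| * x ^ t) ^ k * x ^ (a / 2 - 1) := by ring
    _ ≤ (2 * (k + 1) / a) ^ k * x ^ (a / 2 - 1) := by gcongr

end Real

theorem hasDerivAt_log_Gamma {x : ℝ} (hx : 0 < x) :
    HasDerivAt (fun y => log (Gamma y)) (digamma x) x :=
  (analyticAt_log_Gamma hx).differentiableAt.hasDerivAt

theorem hasDerivAt_digamma {x : ℝ} (hx : 0 < x) : HasDerivAt digamma (trigamma x) x :=
  (analyticAt_log_Gamma hx).deriv.differentiableAt.hasDerivAt

theorem digamma_add_one {x : ℝ} (hx : 0 < x) : digamma (x + 1) = digamma x + x⁻¹ := by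
  have hshift : (fun y => log (Gamma (y + 1))) =ᶠ[𝓝 x] fun y => log (Gamma y) + log y := by
    filter_upwards [Ioi_mem_nhds hx] with y (hy : 0 < y)
    rw [Gamma_add_one hy.ne', log_mul hy.ne' (Gamma_pos_of_pos hy).ne', add_comm]
  have h := (hasDerivAt_log_Gamma (by linarith : 0 < x + 1)).comp_add_const x 1
  exact h.unique <|
    ((hasDerivAt_log_Gamma hx).add (hasDerivAt_log hx.ne')).congr_of_eventuallyEq hshift

theorem trigamma_add_one {x : ℝ} (hx : 0 < x) : trigamma (x + 1) = trigamma x - (x ^ 2)⁻¹ := by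
  have hshift : (fun y => digamma (y + 1)) =ᶠ[𝓝 x] fun y => digamma y + y⁻¹ := by
    filter_upwards [Ioi_mem_nhds hx] with y (hy : 0 < y)
    exact digamma_add_one hy
  have h := (hasDerivAt_digamma (by linarith : 0 < x + 1)).comp_add_const x 1
  rw [h.unique <|
    ((hasDerivAt_digamma hx).add (hasDerivAt_inv hx.ne')).congr_of_eventuallyEq hshift]
  ring

theorem trigamma_sub_trigamma_add_nat {x : ℝ} (hx : 0 < x) (n : ℕ) :
    trigamma x - trigamma (x + n) = ∑ k ∈ range n, ((x + k) ^ 2)⁻¹ := by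
  induction n with
  | zero => simp
  | succ n ih =>
    rw [sum_range_succ, ← ih, Nat.cast_succ, ← add_assoc, trigamma_add_one (by positivity)]
    ring

namespace ProbabilityTheory

theorem _root_.betaMeasure_eq (a b : ℝ) : _root_.betaMeasure a b = betaMeasure a b := by
  unfold _root_.betaMeasure betaMeasure
  congr 1
  funext x
  simp only [_root_.betaPDF, betaPDF_eq, beta, one_div_div]

theorem measurable_betaPDF (a b : ℝ) : Measurable (betaPDF a b) :=
  (measurable_betaPDFReal a b).ennreal_ofReal

theorem ae_mem_Ioo_betaMeasure (a b : ℝ) : ∀ᵐ x ∂betaMeasure a b, x ∈ Set.Ioo 0 1 := by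
  rw [betaMeasure, ae_withDensity_iff (measurable_betaPDF a b)]
  refine ae_of_all _ fun x hx => ?_
  by_contra h
  rw [betaPDF_eq, if_neg (show ¬(0 < x ∧ x < 1) from h), ENNReal.ofReal_zero] at hx
  exact hx rfl

theorem toReal_betaPDF {a b : ℝ} (ha : 0 < a) (hb : 0 < b) (x : ℝ) :
    (betaPDF a b x).toReal =
      (Set.Ioo 0 1).indicator (fun x => (beta a b)⁻¹ * (x ^ (a - 1) * (1 - x) ^ (b - 1))) x := by
  by_cases hx : x ∈ Set.Ioo 0 1
  · rw [betaPDF, ENNReal.toReal_ofReal (betaPDFReal_pos hx.1 hx.2 ha hb).le, betaPDFReal,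
      if_pos (show 0 < x ∧ x < 1 from hx), Set.indicator_of_mem hx]
    ring
  · rw [Set.indicator_of_notMem hx, betaPDF, betaPDFReal,
      if_neg (show ¬(0 < x ∧ x < 1) from hx), ENNReal.ofReal_zero, ENNReal.toReal_zero]

theorem integral_betaMeasure {a b : ℝ} (ha : 0 < a) (hb : 0 < b) (g : ℝ → ℝ) :
    ∫ x, g x ∂betaMeasure a b =
      (beta a b)⁻¹ * ∫ x in Set.Ioo 0 1, g x * (x ^ (a - 1) * (1 - x) ^ (b - 1)) := by
  rw [betaMeasure, integral_withDensity_eq_integral_toReal_smul (measurable_betaPDF a b)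
    (ae_of_all _ fun _ => ENNReal.ofReal_lt_top)]
  simp_rw [toReal_betaPDF ha hb, smul_eq_mul, ← Set.indicator_mul_left]
  rw [integral_indicator measurableSet_Ioo, ← integral_const_mul]
  congr 1 with x
  ring

theorem integrable_betaMeasure_iff {a b : ℝ} (ha : 0 < a) (hb : 0 < b) {g : ℝ → ℝ} :
    Integrable g (betaMeasure a b) ↔
      IntegrableOn (fun x => g x * (x ^ (a - 1) * (1 - x) ^ (b - 1))) (Set.Ioo 0 1) := by
  rw [betaMeasure, integrable_withDensity_iff_integrable_smul' (measurable_betaPDF a b)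
    (ae_of_all _ fun _ => ENNReal.ofReal_lt_top)]
  simp_rw [toReal_betaPDF ha hb, smul_eq_mul, ← Set.indicator_mul_left]
  rw [integrable_indicator_iff measurableSet_Ioo, IntegrableOn, IntegrableOn]
  exact (integrable_congr (ae_of_all _ fun x => by ring)).trans
    (integrable_const_mul_iff (inv_ne_zero (beta_pos ha hb).ne').isUnit _)

theorem betaPDF_one_sub (a b x : ℝ) : betaPDF a b (1 - x) = betaPDF b a x := by
  simp only [betaPDF_eq, sub_sub_cancel, sub_pos, sub_lt_self_iff, beta, add_comm a b,
    mul_comm (Real.Gamma a), and_comm (a := x < 1), mul_right_comm _ ((1 - x) ^ (a - 1))]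

theorem map_one_sub_betaMeasure (a b : ℝ) :
    (betaMeasure a b).map (fun x => 1 - x) = betaMeasure b a := by
  have hemb : MeasurableEmbedding (fun x : ℝ => 1 - x) :=
    (Homeomorph.subLeft (1 : ℝ)).measurableEmbedding
  ext s hs
  rw [hemb.map_apply, betaMeasure, betaMeasure, withDensity_apply _ hs,
    withDensity_apply _ (hemb.measurable hs)]
  simp_rw [← betaPDF_one_sub b a]
  exact (Measure.measurePreserving_sub_left volume 1).setLIntegral_comp_preimage_emb hemb _ s

noncomputable def betaLogMoment (k : ℕ) (a b : ℝ) : ℝ :=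
  ∫ x in Set.Ioo 0 1, log x ^ k * (x ^ (a - 1) * (1 - x) ^ (b - 1))

theorem integrableOn_rpow_mul_one_sub_rpow {a b : ℝ} (ha : 0 < a) (hb : 0 < b) :
    IntegrableOn (fun x : ℝ => x ^ (a - 1) * (1 - x) ^ (b - 1)) (Set.Ioo 0 1) := by
  have := isProbabilityMeasureBeta ha hb
  simpa using (integrable_betaMeasure_iff ha hb (g := fun _ => 1)).1 (integrable_const 1)

theorem integrableOn_abs_log_pow_mul {a b : ℝ} (ha : 0 < a) (hb : 0 < b) (k : ℕ) :
    IntegrableOn (fun x : ℝ => |log x| ^ k * (x ^ (a - 1) * (1 - x) ^ (b - 1)))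
      (Set.Ioo 0 1) := by
  refine ((integrableOn_rpow_mul_one_sub_rpow (half_pos ha) hb).const_mul
    ((2 * (k + 1) / a) ^ k)).mono' (by fun_prop) ?_
  refine (ae_restrict_iff' measurableSet_Ioo).2 (ae_of_all _ fun x ⟨hx0, hx1⟩ => ?_)
  have hb1 : 0 ≤ (1 - x) ^ (b - 1) := rpow_nonneg (by linarith) _
  rw [norm_of_nonneg (by positivity), ← mul_assoc, ← mul_assoc]
  exact mul_le_mul_of_nonneg_right (abs_log_pow_mul_rpow_le ha k hx0 hx1.le) hb1

theorem integrableOn_log_pow_mul {a b : ℝ} (ha : 0 < a) (hb : 0 < b) (k : ℕ) :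
    IntegrableOn (fun x : ℝ => log x ^ k * (x ^ (a - 1) * (1 - x) ^ (b - 1))) (Set.Ioo 0 1) := by
  refine (integrableOn_abs_log_pow_mul ha hb k).mono' (by fun_prop) ?_
  refine (ae_restrict_iff' measurableSet_Ioo).2 (ae_of_all _ fun x ⟨hx0, hx1⟩ => ?_)
  have hb1 : 0 ≤ (1 - x) ^ (b - 1) := rpow_nonneg (by linarith) _
  rw [norm_mul, norm_pow, norm_eq_abs, norm_of_nonneg (by positivity)]

theorem hasDerivAt_betaLogMoment {a b : ℝ} (ha : 0 < a) (hb : 0 < b) (k : ℕ) :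
    HasDerivAt (fun a => betaLogMoment k a b) (betaLogMoment (k + 1) a b) a := by
  refine (hasDerivAt_integral_of_dominated_loc_of_deriv_le
    (F := fun a x => log x ^ k * (x ^ (a - 1) * (1 - x) ^ (b - 1)))
    (F' := fun a x => log x ^ (k + 1) * (x ^ (a - 1) * (1 - x) ^ (b - 1)))
    (Ioi_mem_nhds (half_lt_self ha))
    (Eventually.of_forall fun _ => by fun_prop) (integrableOn_log_pow_mul ha hb k) (by fun_prop)
    ?_ (integrableOn_abs_log_pow_mul (half_pos ha) hb (k + 1)) ?_).2
  · refine (ae_restrict_iff' measurableSet_Ioo).2 (ae_of_all _ fun x ⟨hx0, hx1⟩ a' ha' => ?_)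
    have hb1 : 0 ≤ (1 - x) ^ (b - 1) := rpow_nonneg (by linarith) _
    rw [norm_mul, norm_pow, norm_eq_abs, norm_of_nonneg (by positivity)]
    have hx : x ^ (a' - 1) ≤ x ^ (a / 2 - 1) :=
      rpow_le_rpow_of_exponent_ge hx0 hx1.le (by linarith [show a / 2 < a' from ha'])
    exact mul_le_mul_of_nonneg_left (mul_le_mul_of_nonneg_right hx hb1) (by positivity)
  · refine (ae_restrict_iff' measurableSet_Ioo).2 (ae_of_all _ fun x ⟨hx0, _⟩ a' _ => ?_)
    have := ((((hasDerivAt_id' a').sub_const 1).const_rpow hx0).mul_const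
      ((1 - x) ^ (b - 1))).const_mul (log x ^ k)
    exact this.congr_deriv (by ring)

theorem log_beta {a b : ℝ} (ha : 0 < a) (hb : 0 < b) :
    log (beta a b) = log (Gamma a) + log (Gamma b) - log (Gamma (a + b)) := by
  rw [beta, log_div (mul_pos (Gamma_pos_of_pos ha) (Gamma_pos_of_pos hb)).ne'
    (Gamma_pos_of_pos (add_pos ha hb)).ne', log_mul (Gamma_pos_of_pos ha).ne'
    (Gamma_pos_of_pos hb).ne']

theorem integral_log_pow_betaMeasure {a b : ℝ} (ha : 0 < a) (hb : 0 < b) (k : ℕ) :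
    ∫ x, log x ^ k ∂betaMeasure a b = betaLogMoment k a b / beta a b := by
  rw [integral_betaMeasure ha hb, betaLogMoment, inv_mul_eq_div]

theorem betaLogMoment_zero {a b : ℝ} (ha : 0 < a) (hb : 0 < b) :
    betaLogMoment 0 a b = beta a b := by
  have := isProbabilityMeasureBeta ha hb
  have h := integral_log_pow_betaMeasure ha hb 0
  simp only [pow_zero, integral_const, probReal_univ, smul_eq_mul, mul_one] at h
  rw [eq_div_iff (beta_pos ha hb).ne', one_mul] at h
  exact h.symm

theorem betaLogMoment_one_div_zero {a b : ℝ} (ha : 0 < a) (hb : 0 < b) :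
    betaLogMoment 1 a b / betaLogMoment 0 a b = digamma a - digamma (a + b) := by
  have hlog : (fun y => log (betaLogMoment 0 y b)) =ᶠ[𝓝 a]
      fun y => log (Gamma y) + log (Gamma b) - log (Gamma (y + b)) := by
    filter_upwards [Ioi_mem_nhds ha] with y (hy : 0 < y)
    rw [betaLogMoment_zero hy hb, log_beta hy hb]
  have h := (hasDerivAt_betaLogMoment ha hb 0).log (betaLogMoment_zero ha hb ▸ beta_pos ha hb).ne'
  exact h.unique <| (((hasDerivAt_log_Gamma ha).add_const _).sub
    ((hasDerivAt_log_Gamma (add_pos ha hb)).comp_add_const a b)).congr_of_eventuallyEq hlog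

theorem betaLogMoment_two_div_zero_sub_sq {a b : ℝ} (ha : 0 < a) (hb : 0 < b) :
    betaLogMoment 2 a b / betaLogMoment 0 a b - (betaLogMoment 1 a b / betaLogMoment 0 a b) ^ 2 =
      trigamma a - trigamma (a + b) := by
  have hM0 : betaLogMoment 0 a b ≠ 0 := (betaLogMoment_zero ha hb ▸ beta_pos ha hb).ne'
  have hratio : (fun y => betaLogMoment 1 y b / betaLogMoment 0 y b) =ᶠ[𝓝 a]
      fun y => digamma y - digamma (y + b) := by
    filter_upwards [Ioi_mem_nhds ha] with y (hy : 0 < y)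
    exact betaLogMoment_one_div_zero hy hb
  have h := (hasDerivAt_betaLogMoment ha hb 1).div (hasDerivAt_betaLogMoment ha hb 0) hM0
  refine (h.unique <| ((hasDerivAt_digamma ha).sub
    ((hasDerivAt_digamma (add_pos ha hb)).comp_add_const a b)).congr_of_eventuallyEq hratio) ▸ ?_
  field_simp

theorem memLp_log_betaMeasure {a b : ℝ} (ha : 0 < a) (hb : 0 < b) :
    MemLp log 2 (betaMeasure a b) := by
  rw [memLp_two_iff_integrable_sq (by fun_prop), integrable_betaMeasure_iff ha hb]
  exact integrableOn_log_pow_mul ha hb 2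

theorem variance_log_betaMeasure {a b : ℝ} (ha : 0 < a) (hb : 0 < b) :
    Var[log; betaMeasure a b] = trigamma a - trigamma (a + b) := by
  have := isProbabilityMeasureBeta ha hb
  rw [variance_eq_sub (memLp_log_betaMeasure ha hb), ← betaLogMoment_two_div_zero_sub_sq ha hb,
    betaLogMoment_zero ha hb, ← integral_log_pow_betaMeasure ha hb 2,
    ← integral_log_pow_betaMeasure ha hb 1]
  simp only [Pi.pow_apply, pow_one]

theorem memLp_log_one_sub_betaMeasure {a b : ℝ} (ha : 0 < a) (hb : 0 < b) :
    MemLp (fun x => log (1 - x)) 2 (betaMeasure a b) := by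
  have h := memLp_log_betaMeasure hb ha
  rwa [← map_one_sub_betaMeasure a b, memLp_map_measure_iff (by fun_prop) (by fun_prop)] at h

theorem variance_log_one_sub_betaMeasure {a b : ℝ} (ha : 0 < a) (hb : 0 < b) :
    Var[fun x => log (1 - x); betaMeasure a b] = trigamma b - trigamma (a + b) := by
  rw [add_comm, ← variance_log_betaMeasure hb ha, ← map_one_sub_betaMeasure a b,
    variance_map (by fun_prop) (by fun_prop)]
  rfl

section HasLaw

variable {Ω 𝓧 : Type*} [MeasurableSpace Ω] [MeasurableSpace 𝓧] {X : Ω → 𝓧}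
  {μ : Measure 𝓧} {P : Measure Ω}

theorem hasLaw_of_map_eq (h : P.map X = μ) (hμ : μ ≠ 0) : HasLaw X μ P :=
  ⟨.of_map_ne_zero (h ▸ hμ), h⟩

theorem HasLaw.ae_of_ae (hX : HasLaw X μ P) {p : 𝓧 → Prop} (h : ∀ᵐ x ∂μ, p x) :
    ∀ᵐ ω ∂P, p (X ω) :=
  ae_of_ae_map hX.aemeasurable (hX.map_eq ▸ h)

theorem HasLaw.memLp_fun_comp (hX : HasLaw X μ P) {f : 𝓧 → ℝ} {p : ℝ≥0∞}
    (hf : MemLp f p μ) :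
    MemLp (fun ω => f (X ω)) p P :=
  (hX.map_eq ▸ hf).comp_of_map hX.aemeasurable

theorem HasLaw.variance_fun_comp (hX : HasLaw X μ P) {f : 𝓧 → ℝ} (hf : AEMeasurable f μ) :
    Var[fun ω => f (X ω); P] = Var[f; μ] := by
  rw [← hX.map_eq, variance_map (hX.map_eq ▸ hf) hX.aemeasurable]
  rfl

end HasLaw

end ProbabilityTheory

theorem log_stickWeight_succ {Ω : Type*} {W : ℕ → Ω → ℝ} {m : ℕ} {ω : Ω}
    (hpos : 0 < W m ω) (hlt : ∀ t < m, W t ω < 1) :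
    log (stickWeight W (m + 1) ω) = log (W m ω) + ∑ t ∈ range m, log (1 - W t ω) := by
  have hne : ∀ t ∈ range m, 1 - W t ω ≠ 0 := fun t ht =>
    (sub_pos.2 (hlt t (mem_range.1 ht))).ne'
  rw [stickWeight, Nat.add_sub_cancel, log_mul hpos.ne' (prod_ne_zero_iff.2 hne), log_prod hne]

theorem variance_log_stickWeight {Ω : Type*} [MeasurableSpace Ω] {μ : Measure Ω}
    {W : ℕ → Ω → ℝ} (hind : iIndepFun W μ)
    (hW : ∀ t, ∀ᵐ ω ∂μ, W t ω ∈ Set.Ioo 0 1)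
    (hlog : ∀ t, MemLp (fun ω => log (W t ω)) 2 μ)
    (hlog1 : ∀ t, MemLp (fun ω => log (1 - W t ω)) 2 μ) (m : ℕ) :
    Var[fun ω => log (stickWeight W (m + 1) ω); μ] =
      Var[fun ω => log (W m ω); μ] + ∑ t ∈ range m, Var[fun ω => log (1 - W t ω); μ] := by
  set g : ℕ → ℝ → ℝ := Function.update (fun _ x => log (1 - x)) m log with hg
  have hgm : g m = log := Function.update_self ..
  have hgt : ∀ t ∈ range m, g t = fun x => log (1 - x) := fun t ht =>
    Function.update_of_ne (mem_range.1 ht).ne _ _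
  have hmeas : ∀ t, Measurable (g t) := by
    intro t
    rw [hg, Function.update_apply]
    split_ifs <;> fun_prop
  have hL2 : ∀ t ∈ range (m + 1), MemLp (fun ω => g t (W t ω)) 2 μ := by
    intro t _
    rw [hg, Function.update_apply]
    split_ifs with h
    · exact h ▸ hlog t
    · exact hlog1 t
  have hsum : (fun ω => log (stickWeight W (m + 1) ω)) =ᵐ[μ]
      ∑ t ∈ range (m + 1), fun ω => g t (W t ω) := by
    filter_upwards [ae_all_iff.2 hW] with ω hω
    rw [log_stickWeight_succ (hω m).1 fun t _ => (hω t).2, Finset.sum_apply, sum_range_succ, hgm,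
      add_comm]
    exact congrArg (· + _) (sum_congr rfl fun t ht => by rw [hgt t ht])
  rw [variance_congr hsum, IndepFun.variance_sum hL2 fun i _ j _ hij =>
      (hind.indepFun hij).comp (hmeas i) (hmeas j), sum_range_succ, hgm, add_comm]
  exact congrArg (_ + ·) (sum_congr rfl fun t ht => by rw [hgt t ht])

theorem trigamma_stick_sum {d α : ℝ} (hd : 0 < d) (hα : 0 < α) (m : ℕ) :
    trigamma (1 - d) - trigamma (1 - d + (α + (m + 1) * d)) +
        ∑ t ∈ range m, (trigamma (α + (t + 1) * d) - trigamma (1 - d + (α + (t + 1) * d))) =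
      trigamma (1 - d) - trigamma α +
        1 / d ^ 2 * (trigamma (α / d) - trigamma (α / d + (m + 1 : ℕ))) := by
  have hshift : ∀ t : ℕ, trigamma (1 - d + (α + (t + 1) * d)) =
      trigamma (α + t * d) - ((α + t * d) ^ 2)⁻¹ := by
    intro t
    rw [← trigamma_add_one (by positivity)]
    congr 1
    ring
  have hsq : ∑ t ∈ range (m + 1), ((α + t * d) ^ 2)⁻¹ =
      1 / d ^ 2 * (trigamma (α / d) - trigamma (α / d + (m + 1 : ℕ))) := by
    rw [trigamma_sub_trigamma_add_nat (by positivity), mul_sum]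
    refine sum_congr rfl fun t _ => ?_
    field_simp
  have hterm : ∀ t ∈ range m,
      trigamma (α + (t + 1) * d) - trigamma (1 - d + (α + (t + 1) * d)) =
      (trigamma (α + (t + 1 : ℕ) * d) - trigamma (α + t * d)) + ((α + t * d) ^ 2)⁻¹ := by
    intro t _
    rw [hshift, Nat.cast_succ]
    ring
  rw [sum_congr rfl hterm, sum_add_distrib, sum_range_sub (fun t : ℕ => trigamma (α + t * d)),
    hshift, ← hsq, sum_range_succ]
  simp only [Nat.cast_zero, zero_mul, add_zero]
  ring

theorem pdp_variance_log_stick_weight_general {Ω : Type*} [MeasurableSpace Ω] (μ : Measure Ω)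
    (d α : ℝ) (hd : 0 < d) (hd1 : d < 1) (hα : 0 < α)
    (W : ℕ → Ω → ℝ)
    (hind : iIndepFun W μ)
    (hlaw : ∀ t : ℕ, Measure.map (W t) μ = _root_.betaMeasure (1 - d) (α + (t + 1) * d))
    (h : ℕ) (hh : 1 ≤ h) :
    ProbabilityTheory.variance (fun ω => Real.log (stickWeight W h ω)) μ =
      trigamma (1 - d) - trigamma α +
        (1 / d ^ 2) * (trigamma (α / d) - trigamma (α / d + h)) := by
  obtain ⟨m, rfl⟩ : ∃ m, h = m + 1 := ⟨h - 1, by omega⟩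
  have ha : 0 < 1 - d := by linarith
  have hb (t : ℕ) : 0 < α + (t + 1) * d := by positivity
  have hX (t : ℕ) : HasLaw (W t) (ProbabilityTheory.betaMeasure (1 - d) (α + (t + 1) * d)) μ :=
    hasLaw_of_map_eq ((hlaw t).trans (betaMeasure_eq _ _))
      (isProbabilityMeasureBeta ha (hb t)).ne_zero
  rw [variance_log_stickWeight hind (fun t => (hX t).ae_of_ae (ae_mem_Ioo_betaMeasure _ _))
      (fun t => (hX t).memLp_fun_comp (memLp_log_betaMeasure ha (hb t)))
      (fun t => (hX t).memLp_fun_comp (memLp_log_one_sub_betaMeasure ha (hb t))),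
    (hX m).variance_fun_comp (by fun_prop), variance_log_betaMeasure ha (hb m),
    sum_congr rfl fun t _ => (hX t).variance_fun_comp (f := fun x => log (1 - x)) (by fun_prop),
    sum_congr rfl fun t _ => variance_log_one_sub_betaMeasure ha (hb t), trigamma_stick_sum hd hα]

theorem pdp_variance_log_stick_weight {Ω : Type*} [MeasurableSpace Ω] (μ : Measure Ω)
    [IsProbabilityMeasure μ] (d α : ℝ) (hd : 0 < d) (hd1 : d < 1) (hα : 0 < α)
    (W : ℕ → Ω → ℝ)
    (hind : iIndepFun W μ)
    (hlaw : ∀ t : ℕ, Measure.map (W t) μ = _root_.betaMeasure (1 - d) (α + (t + 1) * d))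
    (h : ℕ) (hh : 1 ≤ h) :
    ProbabilityTheory.variance (fun ω => Real.log (stickWeight W h ω)) μ =
      trigamma (1 - d) - trigamma α +
        (1 / d ^ 2) * (trigamma (α / d) - trigamma (α / d + h)) :=
  pdp_variance_log_stick_weight_general μ d α hd hd1 hα W hind hlaw h hh
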